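/- For every real number θ, the matrix U_SPE(θ) maps the orthonormal product basis {(|00⟩+|10⟩)/√2, (|00⟩−|10⟩)/√2, (|01⟩+|11⟩)/√2, (|01⟩−|11⟩)/√2} to the orthonormal maximally entangled basis {(|00⟩+|11⟩)/√2, (|00⟩−|11⟩)/√2, (|01⟩+|10⟩)/√2, e^{−iθ}(|01⟩−|10⟩)/√2}, respectively; each image state has concurrence 1. -/

import Mathlib

open Matrix Complex
open scoped Matrix Kronecker

noncomputable section

/-- computational basis vector |ab⟩ of ℂ⁴ = ℂ²⊗ℂ², indexed by pairs -/
def ket (a b : Fin 2) : Fin 2 × Fin 2 → ℂ := fun p => if p = (a, b) then 1 else 0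

/-- concurrence C = 2|αδ − βγ| of a two-qubit state with components (α,β,γ,δ) -/
def conc (v : Fin 2 × Fin 2 → ℂ) : ℝ :=
  2 * ‖v (0, 0) * v (1, 1) - v (0, 1) * v (1, 0)‖

/-- hermitian inner product on ℂ⁴ -/
def ip (v w : Fin 2 × Fin 2 → ℂ) : ℂ :=
  ∑ p : Fin 2 × Fin 2, (starRingEnd ℂ) (v p) * w p

/-- the index identification (a,b) ↦ 2a+b matching the ordered basis (|00⟩,|01⟩,|10⟩,|11⟩) -/
def idx : Fin 2 × Fin 2 → Fin 4 :=
  fun p => ⟨2 * p.1.1 + p.2.1, by have h1 := p.1.isLt; have h2 := p.2.isLt; omega⟩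

/-- the SPE circuit matrix U_SPE(θ), in the ordered basis (|00⟩,|01⟩,|10⟩,|11⟩);
it sends |00⟩↦|00⟩, |01⟩↦((1+e^{−iθ})/2)|01⟩+((1−e^{−iθ})/2)|10⟩, |10⟩↦|11⟩,
|11⟩↦((1−e^{−iθ})/2)|01⟩+((1+e^{−iθ})/2)|10⟩. -/
def USPE (θ : ℝ) : Matrix (Fin 2 × Fin 2) (Fin 2 × Fin 2) ℂ :=
  Matrix.of fun p q =>
    (!![1, 0, 0, 0;
        0, (1 + Complex.exp (-Complex.I * (θ : ℂ))) / 2, 0,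
           (1 - Complex.exp (-Complex.I * (θ : ℂ))) / 2;
        0, (1 - Complex.exp (-Complex.I * (θ : ℂ))) / 2, 0,
           (1 + Complex.exp (-Complex.I * (θ : ℂ))) / 2;
        0, 0, 1, 0]) (idx p) (idx q)

/-- the orthonormal product basis {(|00⟩±|10⟩)/√2, (|01⟩±|11⟩)/√2} -/
def prodBasis : Fin 4 → (Fin 2 × Fin 2 → ℂ) :=
  ![((Real.sqrt 2 : ℂ))⁻¹ • (ket 0 0 + ket 1 0),
    ((Real.sqrt 2 : ℂ))⁻¹ • (ket 0 0 - ket 1 0),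
    ((Real.sqrt 2 : ℂ))⁻¹ • (ket 0 1 + ket 1 1),
    ((Real.sqrt 2 : ℂ))⁻¹ • (ket 0 1 - ket 1 1)]

/-- the maximally entangled basis
{(|00⟩+|11⟩)/√2, (|00⟩−|11⟩)/√2, (|01⟩+|10⟩)/√2, e^{−iθ}(|01⟩−|10⟩)/√2} -/
def entBasis (θ : ℝ) : Fin 4 → (Fin 2 × Fin 2 → ℂ) :=
  ![((Real.sqrt 2 : ℂ))⁻¹ • (ket 0 0 + ket 1 1),
    ((Real.sqrt 2 : ℂ))⁻¹ • (ket 0 0 - ket 1 1),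
    ((Real.sqrt 2 : ℂ))⁻¹ • (ket 0 1 + ket 1 0),
    (Complex.exp (-Complex.I * (θ : ℂ)) * ((Real.sqrt 2 : ℂ))⁻¹) • (ket 0 1 - ket 1 0)]

/-!
On span{|00⟩, |10⟩} the gate acts as |a0⟩ ↦ |aa⟩; the two columns it has on span{|01⟩, |11⟩}
sum to |01⟩ + |10⟩ and differ by e^{−iθ}(|01⟩ − |10⟩), which gives the four images by linearity.
Orthonormality of the image basis is inherited from the product basis because U_SPE(θ) is unitary,
and concurrence scales by |c|² under v ↦ c • v.
-/

theorem Matrix.star_mulVec_dotProduct_mulVec_of_mem_unitaryGroup {n R : Type*} [Fintype n]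
    [DecidableEq n] [CommRing R] [StarRing R] {U : Matrix n n R} (hU : U ∈ unitaryGroup n R)
    (v w : n → R) : star (U *ᵥ v) ⬝ᵥ (U *ᵥ w) = star v ⬝ᵥ w := by
  rw [star_mulVec, dotProduct_mulVec, vecMul_vecMul, ← star_eq_conjTranspose,
    (mem_unitaryGroup_iff').1 hU, vecMul_one]

theorem ip_smul_smul (c : ℂ) (v w : Fin 2 × Fin 2 → ℂ) :
    ip (c • v) (c • w) = (normSq c : ℂ) * ip v w := by
  simp only [ip, Finset.mul_sum, Pi.smul_apply, smul_eq_mul, map_mul, normSq_eq_conj_mul_self]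
  exact Finset.sum_congr rfl fun _ _ => by ring

theorem conc_smul (c : ℂ) (v : Fin 2 × Fin 2 → ℂ) : conc (c • v) = normSq c * conc v := by
  simp only [conc, Pi.smul_apply, smul_eq_mul, ← Complex.norm_mul_self_eq_normSq, ← norm_mul]
  rw [show c * v (0, 0) * (c * v (1, 1)) - c * v (0, 1) * (c * v (1, 0))
      = c * c * (v (0, 0) * v (1, 1) - v (0, 1) * v (1, 0)) by ring, norm_mul]
  ring

theorem normSq_inv_sqrt_two : normSq ((Real.sqrt 2 : ℂ))⁻¹ = 1 / 2 := by
  rw [map_inv₀, normSq_ofReal, Real.mul_self_sqrt zero_le_two, one_div]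

theorem USPE_mem_unitaryGroup (θ : ℝ) : USPE θ ∈ unitaryGroup (Fin 2 × Fin 2) ℂ := by
  have hw : starRingEnd ℂ (exp (-(I * θ))) = (exp (-(I * θ)))⁻¹ := by
    rw [← exp_conj, ← exp_neg]; simp
  rw [mem_unitaryGroup_iff']
  ext p q
  fin_cases p <;> fin_cases q <;>
    simp [USPE, idx, Matrix.mul_apply, Fintype.sum_prod_type, map_ofNat, hw] <;>
    field_simp <;> ring

section

variable (θ : ℝ)

theorem USPE_mulVec_ket_zero_zero : USPE θ *ᵥ ket 0 0 = ket 0 0 := by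
  ext p; fin_cases p <;> simp [USPE, ket, idx, mulVec, dotProduct]

theorem USPE_mulVec_ket_one_zero : USPE θ *ᵥ ket 1 0 = ket 1 1 := by
  ext p; fin_cases p <;> simp [USPE, ket, idx, mulVec, dotProduct]

theorem USPE_mulVec_ket_zero_one : USPE θ *ᵥ ket 0 1 =
    ((1 + exp (-I * θ)) / 2) • ket 0 1 + ((1 - exp (-I * θ)) / 2) • ket 1 0 := by
  ext p; fin_cases p <;> simp [USPE, ket, idx, mulVec, dotProduct]

theorem USPE_mulVec_ket_one_one : USPE θ *ᵥ ket 1 1 =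
    ((1 - exp (-I * θ)) / 2) • ket 0 1 + ((1 + exp (-I * θ)) / 2) • ket 1 0 := by
  ext p; fin_cases p <;> simp [USPE, ket, idx, mulVec, dotProduct]

theorem USPE_mulVec_prodBasis (i : Fin 4) : USPE θ *ᵥ prodBasis i = entBasis θ i := by
  fin_cases i <;>
    simp [prodBasis, entBasis, mulVec_smul, mulVec_add, mulVec_sub, USPE_mulVec_ket_zero_zero,
      USPE_mulVec_ket_one_zero, USPE_mulVec_ket_zero_one, USPE_mulVec_ket_one_one] <;>
    module

end

theorem ip_prodBasis (i j : Fin 4) : ip (prodBasis i) (prodBasis j) = if i = j then 1 else 0 := by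
  fin_cases i <;> fin_cases j <;>
    simp only [prodBasis, Fin.reduceFinMk, Fin.zero_eta, cons_val, ip_smul_smul,
      normSq_inv_sqrt_two] <;>
    simp [ip, ket, Fintype.sum_prod_type] <;> norm_num

theorem ip_entBasis (θ : ℝ) (i j : Fin 4) :
    ip (entBasis θ i) (entBasis θ j) = if i = j then 1 else 0 := by
  rw [← ip_prodBasis, ← USPE_mulVec_prodBasis, ← USPE_mulVec_prodBasis]
  exact star_mulVec_dotProduct_mulVec_of_mem_unitaryGroup (USPE_mem_unitaryGroup θ) _ _

theorem conc_prodBasis (i : Fin 4) : conc (prodBasis i) = 0 := by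
  fin_cases i <;> simp [prodBasis, conc, ket]

theorem conc_entBasis (θ : ℝ) (i : Fin 4) : conc (entBasis θ i) = 1 := by
  have hw : normSq (exp (-I * θ)) = 1 := by simp [normSq_eq_norm_sq, norm_exp]
  fin_cases i <;>
    simp only [entBasis, Fin.reduceFinMk, Fin.zero_eta, cons_val, conc_smul, map_mul, hw,
      normSq_inv_sqrt_two] <;>
    simp [conc, ket]

/-- U_SPE(θ) maps the orthonormal product basis to the corresponding orthonormal
maximally entangled basis; each image state has concurrence 1. -/
theorem stmt14 (θ : ℝ) :
    (∀ i, (USPE θ).mulVec (prodBasis i) = entBasis θ i) ∧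
    (∀ i j, ip (prodBasis i) (prodBasis j) = if i = j then 1 else 0) ∧
    (∀ i, conc (prodBasis i) = 0) ∧
    (∀ i j, ip (entBasis θ i) (entBasis θ j) = if i = j then 1 else 0) ∧
    (∀ i, conc (entBasis θ i) = 1) :=
  ⟨USPE_mulVec_prodBasis θ, ip_prodBasis, conc_prodBasis, ip_entBasis θ, conc_entBasis θ⟩
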